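/- arXiv:2503.01492 — 6 statements merged into one kernel-verified Lean document; each statement's English description precedes it below -/
import Mathlib

section
/- Let f, g : ℝ^d → [0,∞) be radially symmetric and radially nonincreasing, with the convolution f * g well defined everywhere. Then f * g is radially symmetric and radially nonincreasing. -/
/-!
Let `σ` be the reflection across the perpendicular bisector of `[x, y]`: an isometry swapping `x`
and `y` and preserving Lebesgue measure. If `‖x‖ ≤ ‖y‖`, the origin lies on the side of `x`, and for
every `z` the differences `f (x - z) - f (y - z)` and `g z - g (σ z)` have the same sign (both are
decided by the side of `z`). Hence the integrand at `x` dominates the one at `y` after averaging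
over `z` and `σ z`. Equality on spheres follows by applying the inequality in both directions.
-/

open MeasureTheory RealInnerProductSpace

section

variable {E : Type*} [NormedAddCommGroup E]

def RadiallyAntitone (f : E → ℝ) : Prop := ∀ x y : E, ‖x‖ ≤ ‖y‖ → f y ≤ f x

theorem RadiallyAntitone.eq_of_norm_eq {f : E → ℝ} (hf : RadiallyAntitone f) {x y : E}
    (h : ‖x‖ = ‖y‖) : f x = f y :=
  le_antisymm (hf y x h.ge) (hf x y h.le)

variable [InnerProductSpace ℝ E]

/-- The reflection of `E` across the perpendicular bisector of the segment `[x, y]`. -/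
noncomputable def bisectorReflection (x y z : E) : E :=
  (ℝ ∙ (x - y))ᗮ.reflection (z - x) + y

variable (x y : E)

theorem bisectorReflection_left : bisectorReflection x y x = y := by
  simp [bisectorReflection]

theorem bisectorReflection_right : bisectorReflection x y y = x := by
  rw [bisectorReflection, show y - x = -(x - y) from (neg_sub x y).symm, map_neg,
    Submodule.reflection_orthogonalComplement_singleton_eq_neg, neg_neg, sub_add_cancel]

theorem norm_bisectorReflection_sub_bisectorReflection (z w : E) :
    ‖bisectorReflection x y z - bisectorReflection x y w‖ = ‖z - w‖ := by
  rw [bisectorReflection, bisectorReflection, add_sub_add_right_eq_sub, ← map_sub,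
    sub_sub_sub_cancel_right, LinearIsometryEquiv.norm_map]

theorem bisectorReflection_apply (z : E) :
    bisectorReflection x y z = z - (1 + 2 * (⟪x - y, z - x⟫ / ‖x - y‖ ^ 2)) • (x - y) := by
  rw [bisectorReflection, Submodule.reflection_orthogonal_apply,
    Submodule.reflection_singleton_apply]
  simp only [RCLike.ofReal_real_eq_id, id]
  module

theorem sq_norm_mul_sq_norm_sub_bisectorReflection (p q : E) :
    ‖x - y‖ ^ 2 * ‖p - bisectorReflection x y q‖ ^ 2 = ‖x - y‖ ^ 2 * ‖p - q‖ ^ 2 +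
      (‖p - y‖ ^ 2 - ‖p - x‖ ^ 2) * (‖q - y‖ ^ 2 - ‖q - x‖ ^ 2) := by
  have hσ : p - bisectorReflection x y q =
      (p - x) - (q - x) + (1 + 2 * (⟪x - y, q - x⟫ / ‖x - y‖ ^ 2)) • (x - y) := by
    rw [bisectorReflection_apply]; module
  have hy : ∀ w, w - y = (w - x) + (x - y) := fun w => by abel
  rw [hσ, hy p, hy q, show p - q = (p - x) - (q - x) by abel]
  generalize p - x = a, q - x = b, x - y = v
  rw [norm_add_sq_real, norm_add_sq_real, norm_add_sq_real, inner_smul_right, norm_smul,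
    inner_sub_left, Real.norm_eq_abs, mul_pow, sq_abs, real_inner_comm v b]
  rcases eq_or_ne v 0 with rfl | hv
  · simp
  have hN : ‖v‖ ^ 2 ≠ 0 := by positivity
  field_simp
  ring

variable {x y}

theorem norm_le_norm_bisectorReflection (hne : x ≠ y) (hxy : ‖x‖ ≤ ‖y‖) {z : E}
    (hz : ‖z - x‖ ≤ ‖z - y‖) : ‖z‖ ≤ ‖bisectorReflection x y z‖ := by
  have key := sq_norm_mul_sq_norm_sub_bisectorReflection x y 0 z
  simp only [zero_sub, norm_neg] at key
  have h0 := pow_le_pow_left₀ (norm_nonneg _) hxy 2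
  have hz2 := pow_le_pow_left₀ (norm_nonneg _) hz 2
  have hN : 0 < ‖x - y‖ ^ 2 := by have := sub_ne_zero.2 hne; positivity
  refine (pow_le_pow_iff_left₀ (norm_nonneg _) (norm_nonneg _) two_ne_zero).1 ?_
  nlinarith [mul_nonneg (sub_nonneg.2 h0) (sub_nonneg.2 hz2)]

theorem norm_bisectorReflection_le (hne : x ≠ y) (hxy : ‖x‖ ≤ ‖y‖) {z : E}
    (hz : ‖z - y‖ ≤ ‖z - x‖) : ‖bisectorReflection x y z‖ ≤ ‖z‖ := by
  have key := sq_norm_mul_sq_norm_sub_bisectorReflection x y 0 z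
  simp only [zero_sub, norm_neg] at key
  have h0 := pow_le_pow_left₀ (norm_nonneg _) hxy 2
  have hz2 := pow_le_pow_left₀ (norm_nonneg _) hz 2
  have hN : 0 < ‖x - y‖ ^ 2 := by have := sub_ne_zero.2 hne; positivity
  refine (pow_le_pow_iff_left₀ (norm_nonneg _) (norm_nonneg _) two_ne_zero).1 ?_
  nlinarith [mul_nonneg (sub_nonneg.2 h0) (sub_nonneg.2 hz2)]

variable [FiniteDimensional ℝ E] [MeasurableSpace E] [BorelSpace E]
  {A : Type*} [NormedAddCommGroup A]

theorem integral_comp_bisectorReflection [NormedSpace ℝ A] (x y : E) (h : E → A) :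
    ∫ z, h (bisectorReflection x y z) = ∫ z, h z := by
  simp only [bisectorReflection]
  rw [integral_sub_right_eq_self (fun z => h ((ℝ ∙ (x - y))ᗮ.reflection z + y)) x,
    integral_comp _ (fun w => h (w + y)), integral_add_right_eq_self]

theorem MeasureTheory.Integrable.comp_bisectorReflection {h : E → A} (hh : Integrable h)
    (x y : E) :
    Integrable fun z => h (bisectorReflection x y z) :=
  ((integrable_comp _ (fun w => h (w + y))).2 (hh.comp_add_right y)).comp_sub_right x

theorem RadiallyAntitone.integral_comp_sub_mul_le {f g : E → ℝ} (hf : RadiallyAntitone f)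
    (hg : RadiallyAntitone g) {x y : E} (hx : Integrable fun z => f (x - z) * g z)
    (hy : Integrable fun z => f (y - z) * g z) (hxy : ‖x‖ ≤ ‖y‖) :
    ∫ z, f (y - z) * g z ≤ ∫ z, f (x - z) * g z := by
  rcases eq_or_ne x y with rfl | hne
  · exact le_rfl
  set σ := bisectorReflection x y
  have hfσ : ∀ z, f (y - σ z) = f (x - z) := fun z => hf.eq_of_norm_eq <| by
    rw [← bisectorReflection_left x y, norm_bisectorReflection_sub_bisectorReflection]
  have hfσ' : ∀ z, f (x - σ z) = f (y - z) := fun z => hf.eq_of_norm_eq <| by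
    rw [← bisectorReflection_right x y, norm_bisectorReflection_sub_bisectorReflection]
  have pointwise : ∀ z, f (y - z) * g z + f (y - σ z) * g (σ z) ≤
      f (x - z) * g z + f (x - σ z) * g (σ z) := by
    intro z
    rw [hfσ, hfσ']
    rcases le_total ‖z - x‖ ‖z - y‖ with hz | hz
    · have hfz : f (y - z) ≤ f (x - z) := hf _ _ (by rwa [norm_sub_rev, norm_sub_rev y])
      have hgz : g (σ z) ≤ g z := hg _ _ (norm_le_norm_bisectorReflection hne hxy hz)
      nlinarith [mul_nonneg (sub_nonneg.2 hfz) (sub_nonneg.2 hgz)]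
    · have hfz : f (x - z) ≤ f (y - z) := hf _ _ (by rwa [norm_sub_rev, norm_sub_rev x])
      have hgz : g z ≤ g (σ z) := hg _ _ (norm_bisectorReflection_le hne hxy hz)
      nlinarith [mul_nonneg (sub_nonneg.2 hfz) (sub_nonneg.2 hgz)]
  have hyσ := hy.comp_bisectorReflection x y
  have hxσ := hx.comp_bisectorReflection x y
  have hsum : ∫ z, (f (y - z) * g z + f (y - σ z) * g (σ z)) ≤
      ∫ z, (f (x - z) * g z + f (x - σ z) * g (σ z)) :=
    integral_mono (hy.add hyσ) (hx.add hxσ) pointwise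
  rw [integral_add hy hyσ, integral_add hx hxσ, integral_comp_bisectorReflection x y
    (fun z => f (y - z) * g z), integral_comp_bisectorReflection x y (fun z => f (x - z) * g z)]
    at hsum
  linarith

end

theorem stmt_2_general (d : ℕ) (f g : EuclideanSpace ℝ (Fin d) → ℝ)
    (hf_mono : ∀ x y, ‖x‖ ≤ ‖y‖ → f y ≤ f x)
    (hg_mono : ∀ x y, ‖x‖ ≤ ‖y‖ → g y ≤ g x)
    (h_int : ∀ x, Integrable (fun y => f (x - y) * g y)) :
    (∀ x y, ‖x‖ = ‖y‖ →
        (∫ z, f (x - z) * g z) = ∫ z, f (y - z) * g z) ∧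
    (∀ x y, ‖x‖ ≤ ‖y‖ →
        (∫ z, f (y - z) * g z) ≤ ∫ z, f (x - z) * g z) := by
  have mono : ∀ x y : EuclideanSpace ℝ (Fin d), ‖x‖ ≤ ‖y‖ →
      (∫ z, f (y - z) * g z) ≤ ∫ z, f (x - z) * g z := fun x y hxy =>
    RadiallyAntitone.integral_comp_sub_mul_le hf_mono hg_mono (h_int x) (h_int y) hxy
  exact ⟨fun x y h => le_antisymm (mono y x h.ge) (mono x y h.le), mono⟩

/-- Convolution of two radially symmetric, radially nonincreasing nonnegative
functions is radially symmetric and radially nonincreasing. -/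
theorem stmt_2 (d : ℕ) (f g : EuclideanSpace ℝ (Fin d) → ℝ)
    (hf_nonneg : ∀ x, 0 ≤ f x) (hg_nonneg : ∀ x, 0 ≤ g x)
    (hf_rad : ∀ x y, ‖x‖ = ‖y‖ → f x = f y)
    (hg_rad : ∀ x y, ‖x‖ = ‖y‖ → g x = g y)
    (hf_mono : ∀ x y, ‖x‖ ≤ ‖y‖ → f y ≤ f x)
    (hg_mono : ∀ x y, ‖x‖ ≤ ‖y‖ → g y ≤ g x)
    (h_int : ∀ x, Integrable (fun y => f (x - y) * g y)) :
    (∀ x y, ‖x‖ = ‖y‖ →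
        (∫ z, f (x - z) * g z) = ∫ z, f (y - z) * g z) ∧
    (∀ x y, ‖x‖ ≤ ‖y‖ →
        (∫ z, f (y - z) * g z) ≤ ∫ z, f (x - z) * g z) :=
  stmt_2_general d f g hf_mono hg_mono h_int
end

section
/- Let f : ℝ^d → [0,∞) be radially symmetric and radially nondecreasing and g : ℝ^d → [0,∞) radially symmetric and radially nonincreasing, with f * g well defined. Then f * g is radially symmetric and radially nondecreasing. -/
open MeasureTheory
open scoped RealInnerProductSpace

noncomputable section
namespace Stmt3Aux

variable {d : ℕ}

/-- Reflection across the hyperplane orthogonal to `u`, as a linear map. -/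
def reflMap (u : EuclideanSpace ℝ (Fin d)) :
    EuclideanSpace ℝ (Fin d) →ₗ[ℝ] EuclideanSpace ℝ (Fin d) :=
  LinearMap.id - (2 : ℝ) • ((innerSL ℝ u).smulRight u).toLinearMap

lemma reflMap_apply (u z : EuclideanSpace ℝ (Fin d)) :
    reflMap u z = z - (2 * ⟪u, z⟫) • u := by
  simp [reflMap, smul_smul]

lemma reflMap_involutive {u : EuclideanSpace ℝ (Fin d)} (hu : ⟪u, u⟫ = 1) :
    Function.Involutive (reflMap u) := by
  intro z
  simp only [reflMap_apply, inner_sub_right, real_inner_smul_right, hu]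
  module

/-- Reflection across the hyperplane orthogonal to a unit vector `u`,
as a linear isometry equivalence. -/
def reflIso (u : EuclideanSpace ℝ (Fin d)) (hu : ⟪u, u⟫ = 1) :
    EuclideanSpace ℝ (Fin d) ≃ₗᵢ[ℝ] EuclideanSpace ℝ (Fin d) :=
  ⟨LinearEquiv.ofInvolutive (reflMap u) (reflMap_involutive hu), fun z => by
      show ‖reflMap u z‖ = ‖z‖
      have h1 : ‖reflMap u z‖ ^ 2 = ‖z‖ ^ 2 := by
        rw [reflMap_apply, ← real_inner_self_eq_norm_sq, ← real_inner_self_eq_norm_sq]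
        simp only [inner_sub_left, inner_sub_right, real_inner_smul_left,
          real_inner_smul_right, hu]
        linear_combination (2 * ⟪u, z⟫) * real_inner_comm z u
      have := Real.sqrt_sq (norm_nonneg (reflMap u z))
      rw [← Real.sqrt_sq (norm_nonneg (reflMap u z)), h1,
        Real.sqrt_sq (norm_nonneg z)]⟩

lemma reflIso_apply (u : EuclideanSpace ℝ (Fin d)) (hu : ⟪u, u⟫ = 1)
    (z : EuclideanSpace ℝ (Fin d)) :
    reflIso u hu z = z - (2 * ⟪u, z⟫) • u := reflMap_apply u z

lemma sq_le_imp_le {a b : ℝ} (ha : 0 ≤ a) (hb : 0 ≤ b) (h : a ^ 2 ≤ b ^ 2) : a ≤ b := by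
  nlinarith

set_option maxHeartbeats 1000000 in
lemma conv_mono {d : ℕ} (f g : EuclideanSpace ℝ (Fin d) → ℝ)
    (hf_rad : ∀ x y, ‖x‖ = ‖y‖ → f x = f y)
    (hf_mono : ∀ x y, ‖x‖ ≤ ‖y‖ → f x ≤ f y)
    (hg_mono : ∀ x y, ‖x‖ ≤ ‖y‖ → g y ≤ g x)
    (h_int : ∀ x, Integrable (fun y => f (x - y) * g y))
    (x y : EuclideanSpace ℝ (Fin d)) (hxy : ‖x‖ ≤ ‖y‖) :
    (∫ z, f (x - z) * g z) ≤ ∫ z, f (y - z) * g z := by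
  rcases eq_or_ne x y with rfl | hne
  · exact le_rfl
  set v : EuclideanSpace ℝ (Fin d) := y - x with hv
  have hv0 : v ≠ 0 := sub_ne_zero.2 (Ne.symm hne)
  have hnv : (0:ℝ) < ‖v‖ := norm_pos_iff.2 hv0
  set u : EuclideanSpace ℝ (Fin d) := ‖v‖⁻¹ • v with hu_def
  have hu : ⟪u, u⟫ = 1 := by
    rw [hu_def, real_inner_smul_left, real_inner_smul_right,
      real_inner_self_eq_norm_sq]
    field_simp
  have hvu : v = ‖v‖ • u := by
    rw [hu_def, smul_smul, mul_inv_cancel₀ hnv.ne', one_smul]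
  have huv : ⟪u, v⟫ = ‖v‖ := by
    calc ⟪u, v⟫ = ⟪u, ‖v‖ • u⟫ := by rw [← hvu]
    _ = ‖v‖ := by rw [real_inner_smul_right, hu, mul_one]
  have huz : ∀ z, ⟪v, z⟫ = ‖v‖ * ⟪u, z⟫ := by
    intro z
    calc ⟪v, z⟫ = ⟪‖v‖ • u, z⟫ := by rw [← hvu]
    _ = ‖v‖ * ⟪u, z⟫ := real_inner_smul_left _ _ _
  set c : ℝ := (⟪u, x⟫ + ⟪u, y⟫) / 2 with hc_def
  have hyx2 : ⟪v, x + y⟫ = ‖y‖ ^ 2 - ‖x‖ ^ 2 := by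
    rw [hv]
    simp only [inner_sub_left, inner_add_right, real_inner_self_eq_norm_sq]
    rw [real_inner_comm y x]
    ring
  have h2c : ‖v‖ * (2 * c) = ‖y‖ ^ 2 - ‖x‖ ^ 2 := by
    rw [hc_def, ← hyx2, inner_add_right, huz x, huz y]
    ring
  have hc : 0 ≤ c := by
    have h2 : (0:ℝ) ≤ ‖y‖ ^ 2 - ‖x‖ ^ 2 :=
      sub_nonneg.2 (pow_le_pow_left₀ (norm_nonneg x) hxy 2)
    nlinarith
  set S := reflIso u hu with hS_def
  set b : EuclideanSpace ℝ (Fin d) := (2 * c) • u with hb_def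
  set R : EuclideanSpace ℝ (Fin d) → EuclideanSpace ℝ (Fin d) :=
    fun z => S z + b with hR0
  clear_value v u c S b R
  have hRdef : ∀ z, R z = z + (2 * (c - ⟪u, z⟫)) • u := by
    intro z
    rw [hR0]
    simp only [hS_def, reflIso_apply, hb_def]
    module
  have hinner_R : ∀ z, ⟪u, R z⟫ = 2 * c - ⟪u, z⟫ := by
    intro z
    rw [hRdef z]
    simp only [inner_add_right, real_inner_smul_right, hu]
    ring
  have hRR : ∀ z, R (R z) = z := by
    intro z
    rw [hRdef (R z), hinner_R z, hRdef z]
    module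
  have hRx : R x = y := by
    have h4 : 2 * (c - ⟪u, x⟫) = ‖v‖ := by
      rw [hc_def, ← huv, hv, inner_sub_right]
      ring
    rw [hRdef x, h4, ← hvu, hv]
    abel
  have hRy : R y = x := by rw [← hRx, hRR]
  have hiso : ∀ a b', ‖R a - R b'‖ = ‖a - b'‖ := by
    intro a b'
    rw [hR0]
    simp only [add_sub_add_right_eq_sub, ← map_sub]
    exact S.norm_map _
  have hC : ∀ a z, ‖a - R z‖ = ‖R a - z‖ := by
    intro a z
    rw [← hiso a (R z), hRR z]
  have hswapx : ∀ z, f (x - R z) = f (y - z) := fun z =>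
    hf_rad _ _ (by rw [hC, hRx])
  have hswapy : ∀ z, f (y - R z) = f (x - z) := fun z =>
    hf_rad _ _ (by rw [hC, hRy])
  -- quantitative norm identities
  have hA : ∀ z, ‖y - z‖ ^ 2 - ‖x - z‖ ^ 2 = 2 * ‖v‖ * (c - ⟪u, z⟫) := by
    intro z
    have e1 : ⟪v, z⟫ = ‖v‖ * ⟪u, z⟫ := huz z
    have e2 : ⟪y, z⟫ - ⟪x, z⟫ = ‖v‖ * ⟪u, z⟫ := by
      rw [← inner_sub_left, ← hv]; exact e1
    rw [norm_sub_sq_real, norm_sub_sq_real]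
    linear_combination -h2c - 2 * e2
  have hu1 : ‖u‖ ^ 2 = 1 := by rw [← real_inner_self_eq_norm_sq, hu]
  have hB : ∀ z, ‖R z‖ ^ 2 - ‖z‖ ^ 2 = 4 * c * (c - ⟪u, z⟫) := by
    intro z
    rw [hRdef z, norm_add_sq_real, real_inner_smul_right, norm_smul, mul_pow,
      Real.norm_eq_abs, sq_abs, hu1]
    linear_combination (4 * (c - ⟪u, z⟫)) * real_inner_comm u z
  -- pointwise nonnegativity
  have hF : ∀ z, 0 ≤ (f (y - z) - f (x - z)) * (g z - g (R z)) := by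
    intro z
    rcases le_total (⟪u, z⟫) c with ht | ht
    · have h5 : ‖x - z‖ ≤ ‖y - z‖ := by
        refine sq_le_imp_le (norm_nonneg _) (norm_nonneg _) ?_
        nlinarith [hA z]
      have h6 : ‖z‖ ≤ ‖R z‖ := by
        refine sq_le_imp_le (norm_nonneg _) (norm_nonneg _) ?_
        nlinarith [hB z]
      exact mul_nonneg (sub_nonneg.2 (hf_mono _ _ h5))
        (sub_nonneg.2 (hg_mono _ _ h6))
    · have h5 : ‖y - z‖ ≤ ‖x - z‖ := by
        refine sq_le_imp_le (norm_nonneg _) (norm_nonneg _) ?_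
        nlinarith [hA z]
      have h6 : ‖R z‖ ≤ ‖z‖ := by
        refine sq_le_imp_le (norm_nonneg _) (norm_nonneg _) ?_
        nlinarith [hB z]
      rw [← neg_mul_neg]
      exact mul_nonneg (neg_nonneg.2 (sub_nonpos.2 (hf_mono _ _ h5)))
        (neg_nonneg.2 (sub_nonpos.2 (hg_mono _ _ h6)))
  -- integrability of composed functions
  have hk1 : Integrable (fun z => f (x - z) * g z) := h_int x
  have hk2 : Integrable (fun z => f (y - z) * g z) := h_int y
  have hk1R : Integrable (fun z => f (x - R z) * g (R z)) := by
    have h7 : Integrable (fun w => f (x - (w + b)) * g (w + b)) :=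
      (h_int x).comp_add_right b
    have h8 := (MeasureTheory.integrable_comp S
        (fun w => f (x - (w + b)) * g (w + b))).2 h7
    simp only [hR0]
    exact h8
  have hk2R : Integrable (fun z => f (y - R z) * g (R z)) := by
    have h7 : Integrable (fun w => f (y - (w + b)) * g (w + b)) :=
      (h_int y).comp_add_right b
    have h8 := (MeasureTheory.integrable_comp S
        (fun w => f (y - (w + b)) * g (w + b))).2 h7
    simp only [hR0]
    exact h8
  -- integral identities
  have hI1 : (∫ z, f (x - R z) * g (R z)) = ∫ z, f (x - z) * g z := by
    have e3 : (∫ z, f (x - (S z + b)) * g (S z + b))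
        = ∫ w, f (x - (w + b)) * g (w + b) :=
      MeasureTheory.integral_comp S (fun w => f (x - (w + b)) * g (w + b))
    have e4 : (∫ w, f (x - (w + b)) * g (w + b)) = ∫ w, f (x - w) * g w :=
      integral_add_right_eq_self (fun w => f (x - w) * g w) b
    simp only [hR0]
    rw [e3, e4]
  have hI2 : (∫ z, f (y - R z) * g (R z)) = ∫ z, f (y - z) * g z := by
    have e3 : (∫ z, f (y - (S z + b)) * g (S z + b))
        = ∫ w, f (y - (w + b)) * g (w + b) :=
      MeasureTheory.integral_comp S (fun w => f (y - (w + b)) * g (w + b))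
    have e4 : (∫ w, f (y - (w + b)) * g (w + b)) = ∫ w, f (y - w) * g w :=
      integral_add_right_eq_self (fun w => f (y - w) * g w) b
    simp only [hR0]
    rw [e3, e4]
  have h0 : 0 ≤ ∫ z, (f (y - z) - f (x - z)) * (g z - g (R z)) :=
    integral_nonneg hF
  have hexpand : ∀ z, (f (y - z) - f (x - z)) * (g z - g (R z)) =
      (f (y - z) * g z + f (y - R z) * g (R z)) -
        (f (x - z) * g z + f (x - R z) * g (R z)) := by
    intro z
    rw [hswapx z, hswapy z]
    ring
  rw [show (fun z => (f (y - z) - f (x - z)) * (g z - g (R z))) =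
      fun z => (f (y - z) * g z + f (y - R z) * g (R z)) -
        (f (x - z) * g z + f (x - R z) * g (R z)) from funext hexpand] at h0
  have hk2' : Integrable (fun z => f (y - z) * g z + f (y - R z) * g (R z)) :=
    hk2.add hk2R
  have hk1' : Integrable (fun z => f (x - z) * g z + f (x - R z) * g (R z)) :=
    hk1.add hk1R
  rw [integral_sub hk2' hk1', integral_add hk2 hk2R,
    integral_add hk1 hk1R, hI1, hI2] at h0
  linarith

end Stmt3Aux
end

open Stmt3Aux in
/-- Convolution of a radially symmetric, radially nondecreasing nonnegative
function with a radially symmetric, radially nonincreasing nonnegative function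
is radially symmetric and radially nondecreasing. -/
theorem stmt_3 (d : ℕ) (f g : EuclideanSpace ℝ (Fin d) → ℝ)
    (hf_nonneg : ∀ x, 0 ≤ f x) (hg_nonneg : ∀ x, 0 ≤ g x)
    (hf_rad : ∀ x y, ‖x‖ = ‖y‖ → f x = f y)
    (hg_rad : ∀ x y, ‖x‖ = ‖y‖ → g x = g y)
    (hf_mono : ∀ x y, ‖x‖ ≤ ‖y‖ → f x ≤ f y)
    (hg_mono : ∀ x y, ‖x‖ ≤ ‖y‖ → g y ≤ g x)
    (h_int : ∀ x, Integrable (fun y => f (x - y) * g y)) :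
    (∀ x y, ‖x‖ = ‖y‖ →
        (∫ z, f (x - z) * g z) = ∫ z, f (y - z) * g z) ∧
    (∀ x y, ‖x‖ ≤ ‖y‖ →
        (∫ z, f (x - z) * g z) ≤ ∫ z, f (y - z) * g z) := by
  constructor
  · intro x y h
    exact le_antisymm
      (conv_mono f g hf_rad hf_mono hg_mono h_int x y h.le)
      (conv_mono f g hf_rad hf_mono hg_mono h_int y x h.ge)
  · intro x y h
    exact conv_mono f g hf_rad hf_mono hg_mono h_int x y h
end

section
/- Let u₀ ∈ L¹(ℝ^d) be nonnegative and u(t,·) = u₀ * Γ(t,·) the heat semigroup solution. For 0 ≤ k < d and any x₀ ∈ ℝ^d there is C = C(d,k), independent of x₀, such that ∫_{ℝ^d} u(t,x)(1+|x−x₀|)^{−k} dx ≤ C ‖u₀‖₁ (1+t)^{−k/2} for all t ≥ 0. -/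
open MeasureTheory Real Set Metric Module
open scoped Convolution

/-!
The solution `u(t)` is nonnegative, has mass `‖u₀‖₁` and is bounded by `(4πt)^(-d/2) ‖u₀‖₁`.
Split the weighted integral at the ball of radius `√t` around `x₀`. Inside, the sup bound and
the homogeneity `∫_{B(0,R)} |z|^(-k) = R^(d-k) ∫_{B(0,1)} |z|^(-k)` (finite because `k < d`) give
`O(t^(-k/2)) ‖u₀‖₁`; outside, the weight is at most `t^(-k/2)`. Since the weight is also at most
`1`, the integral is `O(min 1 (t^(-k/2))) ‖u₀‖₁ = O((1 + t)^(-k/2)) ‖u₀‖₁`.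
-/

section WeightedIntegral

variable {E : Type*} [NormedAddCommGroup E] [NormedSpace ℝ E] [FiniteDimensional ℝ E]
  [MeasurableSpace E] [BorelSpace E] (μ : Measure E) [μ.IsAddHaarMeasure]

theorem setIntegral_ball_norm_rpow (s : ℝ) {R : ℝ} (hR : 0 < R) :
    ∫ x in ball (0 : E) R, ‖x‖ ^ s ∂μ =
      R ^ (finrank ℝ E + s) * ∫ x in ball (0 : E) 1, ‖x‖ ^ s ∂μ := by
  have hscale := Measure.setIntegral_comp_smul_of_pos μ (fun x : E => ‖x‖ ^ s) (ball 0 1) hR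
  simp only [norm_smul, norm_of_nonneg hR.le, mul_rpow hR.le (norm_nonneg _),
    integral_const_mul, smul_unitBall_of_pos hR, smul_eq_mul] at hscale
  rw [rpow_add hR, rpow_natCast, mul_assoc, hscale, ← mul_assoc,
    mul_inv_cancel₀ (pow_ne_zero _ hR.ne'), one_mul]

theorem setIntegral_ball_one_add_norm_rpow_neg_le (hd : 1 ≤ finrank ℝ E) {k : ℝ} (hk0 : 0 ≤ k)
    (hkd : k < finrank ℝ E) {R : ℝ} (hR : 0 < R) :
    ∫ x in ball (0 : E) R, (1 + ‖x‖) ^ (-k) ∂μ ≤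
      R ^ (finrank ℝ E - k) * ∫ x in ball (0 : E) 1, ‖x‖ ^ (-k) ∂μ := by
  have : Nontrivial E := Module.nontrivial_of_finrank_pos (R := ℝ) hd
  have hint : IntegrableOn (fun x : E => ‖x‖ ^ (-k)) (ball 0 R) μ :=
    integrableOn_ball_of_norm_le_rpow hd hkd (C := 1)
      (ae_of_all _ fun x => by simp [abs_of_nonneg, rpow_nonneg])
      (measurable_norm.pow_const _).aestronglyMeasurable
  rw [sub_eq_add_neg, ← setIntegral_ball_norm_rpow μ (-k) hR]
  refine integral_mono_of_nonneg (ae_of_all _ fun x => by positivity) hint ?_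
  -- `‖0‖ ^ (-k) = 0` in `rpow`, so the comparison only holds away from the origin.
  filter_upwards [ae_restrict_of_ae (compl_mem_ae_iff.2 (measure_singleton (μ := μ) 0))]
    with x hx
  exact rpow_le_rpow_of_nonpos (norm_pos_iff.2 hx) (by linarith) (by linarith)

theorem integral_mul_one_add_norm_rpow_neg_le (hd : 1 ≤ finrank ℝ E) {k : ℝ} (hk0 : 0 ≤ k)
    (hkd : k < finrank ℝ E) {Φ : E → ℝ} (hΦ : Integrable Φ μ) (hΦ0 : ∀ x, 0 ≤ Φ x) {A : ℝ}
    (hΦA : ∀ x, Φ x ≤ A) {R : ℝ} (hR : 0 < R) :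
    ∫ x, Φ x * (1 + ‖x‖) ^ (-k) ∂μ ≤
      A * (R ^ (finrank ℝ E - k) * ∫ x in ball (0 : E) 1, ‖x‖ ^ (-k) ∂μ) +
        R ^ (-k) * ∫ x, Φ x ∂μ := by
  have hW0 (x : E) : 0 ≤ (1 + ‖x‖) ^ (-k) := by positivity
  have hW1 (x : E) : ‖(1 + ‖x‖) ^ (-k)‖ ≤ 1 := by
    rw [norm_of_nonneg (hW0 x)]
    exact rpow_le_one_of_one_le_of_nonpos (by linarith [norm_nonneg x]) (by linarith)
  have hWmeas : AEStronglyMeasurable (fun x : E => (1 + ‖x‖) ^ (-k)) μ :=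
    ((measurable_const.add measurable_norm).pow_const _).aestronglyMeasurable
  have hint : Integrable (fun x => Φ x * (1 + ‖x‖) ^ (-k)) μ :=
    hΦ.mul_bdd hWmeas (ae_of_all _ hW1)
  have hWball : IntegrableOn (fun x : E => (1 + ‖x‖) ^ (-k)) (ball 0 R) μ :=
    Measure.integrableOn_of_bounded measure_ball_lt_top.ne hWmeas (ae_of_all _ hW1)
  rw [← integral_add_compl measurableSet_ball hint (s := ball 0 R)]
  gcongr ?_ + ?_
  · calc ∫ x in ball 0 R, Φ x * (1 + ‖x‖) ^ (-k) ∂μ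
        ≤ ∫ x in ball 0 R, A * (1 + ‖x‖) ^ (-k) ∂μ :=
          setIntegral_mono_on hint.integrableOn (hWball.const_mul A) measurableSet_ball
            fun x _ => mul_le_mul_of_nonneg_right (hΦA x) (hW0 x)
      _ = A * ∫ x in ball 0 R, (1 + ‖x‖) ^ (-k) ∂μ := integral_const_mul _ _
      _ ≤ _ := mul_le_mul_of_nonneg_left
          (setIntegral_ball_one_add_norm_rpow_neg_le μ hd hk0 hkd hR) ((hΦ0 0).trans (hΦA 0))
  · calc ∫ x in (ball 0 R)ᶜ, Φ x * (1 + ‖x‖) ^ (-k) ∂μ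
        ≤ ∫ x in (ball 0 R)ᶜ, R ^ (-k) * Φ x ∂μ :=
          setIntegral_mono_on hint.integrableOn (hΦ.integrableOn.const_mul _)
            measurableSet_ball.compl fun x hx => by
              have hRx : R ≤ ‖x‖ := by simpa using hx
              rw [mul_comm]
              exact mul_le_mul_of_nonneg_right
                (rpow_le_rpow_of_nonpos hR (by linarith) (by linarith)) (hΦ0 x)
      _ = R ^ (-k) * ∫ x in (ball 0 R)ᶜ, Φ x ∂μ := integral_const_mul _ _
      _ ≤ R ^ (-k) * ∫ x, Φ x ∂μ :=
          mul_le_mul_of_nonneg_left (setIntegral_le_integral hΦ (ae_of_all _ hΦ0)) (by positivity)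

end WeightedIntegral

theorem min_one_rpow_neg_le_two_rpow_mul {s t : ℝ} (hs : 0 ≤ s) (ht : 0 < t) :
    min 1 (t ^ (-s)) ≤ 2 ^ s * (1 + t) ^ (-s) := by
  rw [rpow_neg (by positivity : (0 : ℝ) ≤ 1 + t), ← div_eq_mul_inv,
    ← div_rpow zero_le_two (by positivity)]
  rcases le_total t 1 with ht1 | ht1
  · exact (min_le_left _ _).trans (one_le_rpow ((one_le_div (by positivity)).2 (by linarith)) hs)
  · refine (min_le_right _ _).trans ?_
    rw [rpow_neg ht.le, ← inv_rpow ht.le]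
    exact rpow_le_rpow (by positivity)
      (by rw [inv_eq_one_div, div_le_div_iff₀ ht (by positivity)]; linarith) hs

section HeatSemigroup

variable (E : Type*) [NormedAddCommGroup E] [InnerProductSpace ℝ E]

noncomputable def heatKernel (t : ℝ) (z : E) : ℝ :=
  (4 * π * t) ^ (-(finrank ℝ E : ℝ) / 2) * exp (-‖z‖ ^ 2 / (4 * t))

noncomputable def heatSemigroup [FiniteDimensional ℝ E] [MeasurableSpace E] [BorelSpace E]
    (t : ℝ) (u₀ : E → ℝ) (x : E) : ℝ :=
  ∫ y, heatKernel E t (x - y) * u₀ y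

variable {E}

/-- The prefactor is `0 ^ (-d/2) = 0` in `rpow`. -/
theorem heatKernel_zero_time (hd : finrank ℝ E ≠ 0) (z : E) : heatKernel E 0 z = 0 := by
  simp [heatKernel, zero_rpow, hd]

theorem heatKernel_nonneg {t : ℝ} (ht : 0 ≤ t) (z : E) : 0 ≤ heatKernel E t z := by
  unfold heatKernel
  positivity

theorem heatKernel_le {t : ℝ} (ht : 0 ≤ t) (z : E) :
    heatKernel E t z ≤ (4 * π * t) ^ (-(finrank ℝ E : ℝ) / 2) := by
  refine mul_le_of_le_one_right (by positivity) (exp_le_one_iff.2 ?_)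
  rw [neg_div]
  exact neg_nonpos.2 (by positivity)

variable [FiniteDimensional ℝ E] [MeasurableSpace E] [BorelSpace E]

theorem integral_heatKernel {t : ℝ} (ht : 0 < t) : ∫ z, heatKernel E t z = 1 := by
  have hexp (z : E) : -‖z‖ ^ 2 / (4 * t) = -(4 * t)⁻¹ * ‖z‖ ^ 2 := by ring
  have h4πt : π / (4 * t)⁻¹ = 4 * π * t := by field_simp
  simp_rw [heatKernel, hexp]
  rw [integral_const_mul, GaussianFourier.integral_rexp_neg_mul_sq_norm (by positivity), h4πt,
    neg_div, rpow_neg (by positivity)]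
  exact inv_mul_cancel₀ (by positivity)

theorem integrable_heatKernel {t : ℝ} (ht : 0 < t) : Integrable (heatKernel E t) :=
  Integrable.of_integral_ne_zero (by rw [integral_heatKernel ht]; exact one_ne_zero)

theorem heatSemigroup_eq_convolution (t : ℝ) (u₀ : E → ℝ) :
    heatSemigroup E t u₀ = heatKernel E t ⋆[ContinuousLinearMap.mul ℝ ℝ] u₀ :=
  funext fun _ => convolution_mul_swap.symm

theorem integrable_heatSemigroup {t : ℝ} (ht : 0 < t) {u₀ : E → ℝ} (hu : Integrable u₀) :
    Integrable (heatSemigroup E t u₀) := by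
  rw [heatSemigroup_eq_convolution]
  exact (integrable_heatKernel ht).integrable_convolution _ hu

theorem integral_heatSemigroup {t : ℝ} (ht : 0 < t) {u₀ : E → ℝ} (hu : Integrable u₀) :
    ∫ x, heatSemigroup E t u₀ x = ∫ y, u₀ y := by
  rw [heatSemigroup_eq_convolution,
    integral_convolution (ContinuousLinearMap.mul ℝ ℝ) (integrable_heatKernel ht) hu,
    integral_heatKernel ht, ContinuousLinearMap.mul_apply', one_mul]

theorem heatSemigroup_nonneg {t : ℝ} (ht : 0 ≤ t) {u₀ : E → ℝ} (hu0 : ∀ y, 0 ≤ u₀ y) (x : E) :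
    0 ≤ heatSemigroup E t u₀ x :=
  integral_nonneg fun y => mul_nonneg (heatKernel_nonneg ht _) (hu0 y)

theorem heatSemigroup_le {t : ℝ} (ht : 0 ≤ t) {u₀ : E → ℝ} (hu : Integrable u₀)
    (hu0 : ∀ y, 0 ≤ u₀ y) (x : E) :
    heatSemigroup E t u₀ x ≤ (4 * π * t) ^ (-(finrank ℝ E : ℝ) / 2) * ∫ y, u₀ y := by
  rw [← integral_const_mul]
  exact integral_mono_of_nonneg
    (ae_of_all _ fun y => mul_nonneg (heatKernel_nonneg ht _) (hu0 y)) (hu.const_mul _)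
    (ae_of_all _ fun y => mul_le_mul_of_nonneg_right (heatKernel_le ht _) (hu0 y))

theorem integral_heatSemigroup_mul_one_add_norm_sub_rpow_neg_le (hd : 1 ≤ finrank ℝ E) {k : ℝ}
    (hk0 : 0 ≤ k) (hkd : k < finrank ℝ E) {t : ℝ} (ht : 0 < t) {u₀ : E → ℝ} (hu : Integrable u₀)
    (hu0 : ∀ y, 0 ≤ u₀ y) (x₀ : E) :
    ∫ x, heatSemigroup E t u₀ x * (1 + ‖x - x₀‖) ^ (-k) ≤
      ((4 * π) ^ (-(finrank ℝ E : ℝ) / 2) * (∫ z in ball (0 : E) 1, ‖z‖ ^ (-k)) + 1) *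
        (∫ y, u₀ y) * t ^ (-k / 2) := by
  rw [← integral_add_right_eq_self _ x₀]
  simp only [add_sub_cancel_right]
  have hsplit := integral_mul_one_add_norm_rpow_neg_le volume hd hk0 hkd
    ((integrable_heatSemigroup ht hu).comp_add_right x₀)
    (fun _ => heatSemigroup_nonneg ht.le hu0 _) (fun _ => heatSemigroup_le ht.le hu hu0 _)
    (rpow_pos_of_pos ht (1 / 2))
  rw [integral_add_right_eq_self (fun x => heatSemigroup E t u₀ x) x₀,
    integral_heatSemigroup ht hu] at hsplit
  refine hsplit.trans_eq ?_
  have htt : t ^ (-(finrank ℝ E : ℝ) / 2) * t ^ (1 / 2 * (finrank ℝ E - k)) = t ^ (-k / 2) := by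
    rw [← rpow_add ht]
    ring_nf
  have ht' : t ^ (1 / 2 * -k) = t ^ (-k / 2) := by ring_nf
  rw [← rpow_mul ht.le, ← rpow_mul ht.le, mul_rpow (by positivity) ht.le]
  linear_combination ((4 * π) ^ (-(finrank ℝ E : ℝ) / 2) * (∫ y, u₀ y) *
    ∫ z in ball (0 : E) 1, ‖z‖ ^ (-k)) * htt + (∫ y, u₀ y) * ht'

theorem exists_integral_heatSemigroup_mul_one_add_norm_sub_rpow_neg_le (hd : 1 ≤ finrank ℝ E)
    {k : ℝ} (hk0 : 0 ≤ k) (hkd : k < finrank ℝ E) :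
    ∃ C : ℝ, 0 < C ∧ ∀ u₀ : E → ℝ, Integrable u₀ → (∀ y, 0 ≤ u₀ y) → ∀ (x₀ : E) (t : ℝ), 0 ≤ t →
      ∫ x, heatSemigroup E t u₀ x * (1 + ‖x - x₀‖) ^ (-k) ≤
        C * (∫ y, u₀ y) * (1 + t) ^ (-k / 2) := by
  set c := (4 * π) ^ (-(finrank ℝ E : ℝ) / 2) * ∫ z in ball (0 : E) 1, ‖z‖ ^ (-k)
  have hc : 0 ≤ c :=
    mul_nonneg (by positivity) (setIntegral_nonneg measurableSet_ball fun z _ => by positivity)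
  refine ⟨(c + 1) * 2 ^ (k / 2), by positivity, fun u₀ hu hu0 x₀ t ht => ?_⟩
  have hM : 0 ≤ ∫ y, u₀ y := integral_nonneg hu0
  rcases ht.eq_or_lt with rfl | ht
  · have hzero : heatSemigroup E 0 u₀ = 0 :=
      funext fun x => by simp [heatSemigroup, heatKernel_zero_time (by omega : finrank ℝ E ≠ 0)]
    simp only [hzero, Pi.zero_apply, zero_mul, integral_zero]
    positivity
  have hmass : ∫ x, heatSemigroup E t u₀ x * (1 + ‖x - x₀‖) ^ (-k) ≤ (c + 1) * ∫ y, u₀ y :=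
    calc ∫ x, heatSemigroup E t u₀ x * (1 + ‖x - x₀‖) ^ (-k)
        ≤ ∫ x, heatSemigroup E t u₀ x :=
          integral_mono_of_nonneg
            (ae_of_all _ fun x => mul_nonneg (heatSemigroup_nonneg ht.le hu0 x) (by positivity))
            (integrable_heatSemigroup ht hu)
            (ae_of_all _ fun x => mul_le_of_le_one_right (heatSemigroup_nonneg ht.le hu0 x)
              (rpow_le_one_of_one_le_of_nonpos (by linarith [norm_nonneg (x - x₀)]) (by linarith)))
      _ = ∫ y, u₀ y := integral_heatSemigroup ht hu
      _ ≤ (c + 1) * ∫ y, u₀ y := le_mul_of_one_le_left hM (by linarith)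
  calc ∫ x, heatSemigroup E t u₀ x * (1 + ‖x - x₀‖) ^ (-k)
      ≤ (c + 1) * (∫ y, u₀ y) * min 1 (t ^ (-k / 2)) := by
        rw [mul_min_of_nonneg _ _ (by positivity), mul_one]
        exact le_min hmass
          (integral_heatSemigroup_mul_one_add_norm_sub_rpow_neg_le hd hk0 hkd ht hu hu0 x₀)
    _ ≤ (c + 1) * (∫ y, u₀ y) * (2 ^ (k / 2) * (1 + t) ^ (-k / 2)) := by
        gcongr
        simpa only [neg_div] using min_one_rpow_neg_le_two_rpow_mul (by positivity : 0 ≤ k / 2) ht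
    _ = (c + 1) * 2 ^ (k / 2) * (∫ y, u₀ y) * (1 + t) ^ (-k / 2) := by ring

end HeatSemigroup

/-- Decay of negative moments for heat semigroup solutions, with a constant
independent of the center `x₀`. -/
theorem stmt_5 (d : ℕ) (hd : 1 ≤ d) (k : ℝ) (hk0 : 0 ≤ k) (hkd : k < d) :
    ∃ C : ℝ, 0 < C ∧
      ∀ (u₀ : EuclideanSpace ℝ (Fin d) → ℝ), Integrable u₀ → (∀ y, 0 ≤ u₀ y) →
      ∀ (x₀ : EuclideanSpace ℝ (Fin d)) (t : ℝ), 0 ≤ t →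
        (∫ x : EuclideanSpace ℝ (Fin d),
            (∫ y : EuclideanSpace ℝ (Fin d),
              (4 * π * t) ^ (-(d : ℝ) / 2) * Real.exp (-‖x - y‖ ^ 2 / (4 * t)) * u₀ y)
              * (1 + ‖x - x₀‖) ^ (-k))
          ≤ C * (∫ y, u₀ y) * (1 + t) ^ (-k / 2) := by
  simpa only [heatSemigroup, heatKernel, finrank_euclideanSpace_fin] using
    exists_integral_heatSemigroup_mul_one_add_norm_sub_rpow_neg_le
      (E := EuclideanSpace ℝ (Fin d)) (by simpa using hd) hk0 (by simpa using hkd)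
end

section
/- Let λ > 0 and q : [0,∞) → [0,∞) continuous. If h : [0,∞) → [0,∞) is C¹ and satisfies h'(τ) ≤ −λ h(τ) + √(h(τ))·√(q(τ)) for all τ ≥ 0, then h(τ) ≤ 2 e^{−λτ} h(0) + e^{−λτ} ( ∫₀^τ e^{λs/2} √(q(s)) ds )² for all τ ≥ 0. -/
/-!
Put `g τ = e^{λτ} h τ`. The hypothesis becomes `g' ≤ √g · p` with `p s = e^{λs/2} √(q s)`,
i.e. `(√g)' ≤ p / 2`, so `√(g τ) ≤ √(h 0) + ½ ∫₀^τ p`; squaring with `(a + b)² ≤ 2a² + 2b²`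
and multiplying by `e^{-λτ}` gives the bound. Since `√` is not differentiable at `0`, the
integration is done for `√(g + ε)` and then `ε → 0⁺`.
-/

open Real intervalIntegral Set Filter MeasureTheory

section SqrtComparison

variable {g g' p : ℝ → ℝ} {a b : ℝ}

theorem sqrt_add_sub_sqrt_add_le_half_integral (hab : a ≤ b)
    (hg : ∀ x ∈ Icc a b, HasDerivAt g (g' x) x) (hg_nonneg : ∀ x ∈ Icc a b, 0 ≤ g x)
    (hp : IntegrableOn p (Icc a b)) (hp_nonneg : ∀ x ∈ Ioo a b, 0 ≤ p x)
    (hg' : ∀ x ∈ Ioo a b, g' x ≤ √(g x) * p x) {ε : ℝ} (hε : 0 < ε) :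
    √(g b + ε) - √(g a + ε) ≤ (∫ x in a..b, p x) / 2 := by
  have hpos : ∀ x ∈ Icc a b, 0 < g x + ε := fun x hx => by linarith [hg_nonneg x hx]
  have hderiv : ∀ x ∈ Icc a b,
      HasDerivAt (fun y => √(g y + ε)) (g' x / (2 * √(g x + ε))) x := fun x hx =>
    ((hg x hx).add_const ε).sqrt (hpos x hx).ne'
  rw [← intervalIntegral.integral_div]
  refine sub_le_integral_of_hasDeriv_right_of_le hab
    (fun x hx => (hderiv x hx).continuousAt.continuousWithinAt)
    (fun x hx => (hderiv x (Ioo_subset_Icc_self hx)).hasDerivWithinAt) (hp.div_const 2)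
    (fun x hx => ?_)
  rw [div_le_div_iff₀ (mul_pos two_pos (sqrt_pos.2 (hpos x (Ioo_subset_Icc_self hx)))) two_pos]
  have hsqrt_le : √(g x) ≤ √(g x + ε) := sqrt_le_sqrt (le_add_of_nonneg_right hε.le)
  nlinarith [hg' x hx, hp_nonneg x hx]

theorem sqrt_le_sqrt_add_half_integral_of_hasDerivAt_le (hab : a ≤ b)
    (hg : ∀ x ∈ Icc a b, HasDerivAt g (g' x) x) (hg_nonneg : ∀ x ∈ Icc a b, 0 ≤ g x)
    (hp : IntegrableOn p (Icc a b)) (hp_nonneg : ∀ x ∈ Ioo a b, 0 ≤ p x)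
    (hg' : ∀ x ∈ Ioo a b, g' x ≤ √(g x) * p x) :
    √(g b) ≤ √(g a) + (∫ x in a..b, p x) / 2 := by
  have hcont : Continuous fun ε => √(g b + ε) - √(g a + ε) := by fun_prop
  have hlim := (hcont.tendsto 0).mono_left (nhdsWithin_le_nhds (s := Ioi 0))
  have := le_of_tendsto hlim (eventually_nhdsWithin_of_forall fun ε hε =>
    sqrt_add_sub_sqrt_add_le_half_integral hab hg hg_nonneg hp hp_nonneg hg' hε)
  simp only [add_zero] at this
  linarith

end SqrtComparison

theorem exp_mul_mul_add_le_sqrt_mul_mul {lam x y d r : ℝ} (hd : d ≤ -lam * y + √y * √r) :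
    exp (lam * x) * (lam * y + d) ≤ √(exp (lam * x) * y) * (exp (lam * x / 2) * √r) := by
  have hexp : exp (lam * x) = exp (lam * x / 2) * exp (lam * x / 2) := by
    rw [← exp_add, add_halves]
  rw [sqrt_mul (exp_pos _).le, hexp, sqrt_mul_self (exp_pos _).le]
  have := mul_le_mul_of_nonneg_left (by linarith : lam * y + d ≤ √y * √r)
    (mul_pos (exp_pos (lam * x / 2)) (exp_pos (lam * x / 2))).le
  linarith

theorem stmt_10_general (lam : ℝ) (q h : ℝ → ℝ)
    (hq_cont : Continuous q)
    (hh_nonneg : ∀ τ, 0 ≤ h τ) (hh_smooth : ContDiff ℝ 1 h)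
    (hineq : ∀ τ : ℝ, 0 ≤ τ →
      deriv h τ ≤ -lam * h τ + Real.sqrt (h τ) * Real.sqrt (q τ)) :
    ∀ τ : ℝ, 0 ≤ τ →
      h τ ≤ 2 * Real.exp (-lam * τ) * h 0 +
        Real.exp (-lam * τ) *
          (∫ s in (0:ℝ)..τ, Real.exp (lam * s / 2) * Real.sqrt (q s)) ^ 2 := by
  intro τ hτ
  set I := ∫ s in (0:ℝ)..τ, exp (lam * s / 2) * √(q s)
  have hh_diff : Differentiable ℝ h := hh_smooth.differentiable one_ne_zero
  have hderiv : ∀ x, HasDerivAt (fun x => exp (lam * x) * h x)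
      (exp (lam * x) * (lam * h x + deriv h x)) x := fun x =>
    (((hasDerivAt_id' x).const_mul lam).exp.mul (hh_diff x).hasDerivAt).congr_deriv (by ring)
  have hsqrt : √(exp (lam * τ) * h τ) ≤ √(exp (lam * 0) * h 0) + I / 2 :=
    sqrt_le_sqrt_add_half_integral_of_hasDerivAt_le hτ (fun x _ => hderiv x)
      (fun x _ => mul_nonneg (exp_pos _).le (hh_nonneg x))
      (by fun_prop : Continuous fun s => exp (lam * s / 2) * √(q s)).integrableOn_Icc
      (fun s _ => by positivity) (fun s hs => exp_mul_mul_add_le_sqrt_mul_mul (hineq s hs.1.le))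
  obtain ⟨-, hsq⟩ := sqrt_le_iff.1 hsqrt
  rw [mul_zero, exp_zero, one_mul] at hsq
  have hweighted : exp (lam * τ) * h τ ≤ 2 * h 0 + I ^ 2 := by
    nlinarith [add_sq_le (a := √(h 0)) (b := I / 2), sq_sqrt (hh_nonneg 0)]
  calc h τ = exp (-lam * τ) * (exp (lam * τ) * h τ) := by
        rw [← mul_assoc, ← exp_add, neg_mul, neg_add_cancel, exp_zero, one_mul]
    _ ≤ exp (-lam * τ) * (2 * h 0 + I ^ 2) := by gcongr
    _ = _ := by ring

/-- Grönwall-type lemma for `h' ≤ -λ h + √h √q`. -/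
theorem stmt_10 (lam : ℝ) (hlam : 0 < lam) (q h : ℝ → ℝ)
    (hq_cont : Continuous q) (hq_nonneg : ∀ τ, 0 ≤ q τ)
    (hh_nonneg : ∀ τ, 0 ≤ h τ) (hh_smooth : ContDiff ℝ 1 h)
    (hineq : ∀ τ : ℝ, 0 ≤ τ →
      deriv h τ ≤ -lam * h τ + Real.sqrt (h τ) * Real.sqrt (q τ)) :
    ∀ τ : ℝ, 0 ≤ τ →
      h τ ≤ 2 * Real.exp (-lam * τ) * h 0 +
        Real.exp (-lam * τ) *
          (∫ s in (0:ℝ)..τ, Real.exp (lam * s / 2) * Real.sqrt (q s)) ^ 2 :=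
  stmt_10_general lam q h hq_cont hh_nonneg hh_smooth hineq
end

section
/- For every M > 0 and every dimension d ≥ 1 there is a constant C = C(d,M) such that for all t > 0 and all v ∈ ℝ^d with |v| ≤ M√t: ∫_{ℝ^d} |x|² |Γ(t,x) − Γ(t,x−v)| dx ≤ C √t |v|, where Γ(t,x) = (4πt)^{−d/2} e^{−|x|²/(4t)}. -/
/-!
Substituting `x = 2√t • y` turns the integral into
`4t π^(-d/2) ∫ ‖y‖² |e^(-‖y‖²) - e^(-‖y - w‖²)| dy` with `w = v / (2√t)`, so `‖w‖ ≤ M / 2`.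
By the mean value theorem the integrand is at most `‖w‖ e^(‖w‖²) ‖y‖² (2‖y‖ + ‖w‖) e^(-‖y‖²/2)`,
which is integrable, so the integral is `O(‖w‖)`; the prefactor `4t` turns
`‖w‖ = ‖v‖ / (2√t)` into `2√t ‖v‖`.
-/

open MeasureTheory Real

lemma Real.abs_exp_neg_sub_exp_neg_le (a b : ℝ) :
    |exp (-a) - exp (-b)| ≤ |a - b| * exp (-min a b) := by
  wlog hab : a ≤ b generalizing a b
  · simpa only [abs_sub_comm, min_comm] using this b a (le_of_not_ge hab)
  have hexp : exp (-b) = exp (-a) * exp (-(b - a)) := by rw [← exp_add]; ring_nf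
  rw [min_eq_left hab, abs_of_nonneg (sub_nonneg.2 (exp_le_exp.2 (neg_le_neg hab))),
    abs_of_nonpos (sub_nonpos.2 hab), hexp]
  nlinarith [one_sub_le_exp_neg (b - a), exp_pos (-a)]

lemma abs_exp_neg_sq_norm_sub_exp_neg_sq_norm_sub_le {E : Type*} [SeminormedAddCommGroup E]
    (x v : E) :
    |exp (-‖x‖ ^ 2) - exp (-‖x - v‖ ^ 2)| ≤
      ‖v‖ * (2 * ‖x‖ + ‖v‖) * exp (‖v‖ ^ 2) * exp (-2⁻¹ * ‖x‖ ^ 2) := by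
  have hx := norm_nonneg x
  have hv := norm_nonneg v
  have hdiff : |‖x‖ ^ 2 - ‖x - v‖ ^ 2| ≤ ‖v‖ * (2 * ‖x‖ + ‖v‖) := by
    have h₁ : |‖x‖ - ‖x - v‖| ≤ ‖v‖ := by simpa using abs_norm_sub_norm_le x (x - v)
    have h₂ : ‖x - v‖ ≤ ‖x‖ + ‖v‖ := norm_sub_le x v
    rw [show ‖x‖ ^ 2 - ‖x - v‖ ^ 2 = (‖x‖ - ‖x - v‖) * (‖x‖ + ‖x - v‖) by ring, abs_mul,
      abs_of_nonneg (by positivity : 0 ≤ ‖x‖ + ‖x - v‖)]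
    exact mul_le_mul h₁ (by linarith) (by positivity) hv
  have hmin : 2⁻¹ * ‖x‖ ^ 2 - ‖v‖ ^ 2 ≤ min (‖x‖ ^ 2) (‖x - v‖ ^ 2) := by
    have : ‖x‖ ≤ ‖x - v‖ + ‖v‖ := norm_le_norm_sub_add x v
    refine le_min (by nlinarith) ?_
    nlinarith [sq_nonneg (‖x - v‖ - ‖v‖), mul_self_le_mul_self hx this]
  calc |exp (-‖x‖ ^ 2) - exp (-‖x - v‖ ^ 2)|
      ≤ |‖x‖ ^ 2 - ‖x - v‖ ^ 2| * exp (-min (‖x‖ ^ 2) (‖x - v‖ ^ 2)) :=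
        abs_exp_neg_sub_exp_neg_le _ _
    _ ≤ ‖v‖ * (2 * ‖x‖ + ‖v‖) * exp (‖v‖ ^ 2 + -2⁻¹ * ‖x‖ ^ 2) :=
        mul_le_mul hdiff (exp_le_exp.2 (by linarith)) (exp_pos _).le (by positivity)
    _ = _ := by rw [exp_add]; ring

section InnerProductSpace

variable {V : Type*} [NormedAddCommGroup V] [InnerProductSpace ℝ V] [FiniteDimensional ℝ V]
  [MeasurableSpace V] [BorelSpace V]

lemma integrable_exp_neg_mul_sq_norm {b : ℝ} (hb : 0 < b) :
    Integrable fun x : V ↦ exp (-b * ‖x‖ ^ 2) :=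
  Integrable.of_integral_ne_zero <| by
    rw [GaussianFourier.integral_rexp_neg_mul_sq_norm hb]
    exact (rpow_pos_of_pos (div_pos pi_pos hb) _).ne'

lemma integrable_norm_pow_mul_exp_neg_mul_sq_norm (k : ℕ) {b : ℝ} (hb : 0 < b) :
    Integrable fun x : V ↦ ‖x‖ ^ k * exp (-b * ‖x‖ ^ 2) := by
  refine ((integrable_exp_neg_mul_sq_norm (half_pos hb)).const_mul
    (exp (k ^ 2 / (2 * b)))).mono' (by fun_prop) (.of_forall fun x ↦ ?_)
  set r := ‖x‖
  have hpow : r ^ k ≤ exp (k * r) := by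
    rw [exp_nat_mul]
    exact pow_le_pow_left₀ (norm_nonneg x) (by linarith [add_one_le_exp r]) k
  have hsquare : k * r + -b * r ^ 2 ≤ k ^ 2 / (2 * b) + -(b / 2) * r ^ 2 := by
    have hnonneg : 0 ≤ (b * r - k) ^ 2 / (2 * b) := by positivity
    have hcomplete : (b * r - k) ^ 2 / (2 * b) =
        k ^ 2 / (2 * b) + -(b / 2) * r ^ 2 - (k * r + -b * r ^ 2) := by
      field_simp; ring
    linarith
  rw [norm_mul, norm_pow, norm_norm, norm_of_nonneg (exp_pos _).le, ← exp_add]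
  calc r ^ k * exp (-b * r ^ 2) ≤ exp (k * r) * exp (-b * r ^ 2) := by gcongr
    _ ≤ exp (k ^ 2 / (2 * b) + -(b / 2) * r ^ 2) := by
      rw [← exp_add]; exact exp_le_exp.2 hsquare

lemma exists_integral_sq_norm_mul_abs_exp_neg_sq_norm_sub_le (M : ℝ) :
    ∃ C > 0, ∀ w : V, ‖w‖ ≤ M →
      ∫ y, ‖y‖ ^ 2 * |exp (-‖y‖ ^ 2) - exp (-‖y - w‖ ^ 2)| ≤ C * ‖w‖ := by
  set g : V → ℝ := fun y ↦
    2 * (‖y‖ ^ 3 * exp (-2⁻¹ * ‖y‖ ^ 2)) + M * (‖y‖ ^ 2 * exp (-2⁻¹ * ‖y‖ ^ 2))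
  have hg : Integrable g :=
    ((integrable_norm_pow_mul_exp_neg_mul_sq_norm 3 (by norm_num)).const_mul 2).add
      ((integrable_norm_pow_mul_exp_neg_mul_sq_norm 2 (by norm_num)).const_mul M)
  refine ⟨max (exp (M ^ 2) * ∫ y, g y) 1, by positivity, fun w hw ↦ ?_⟩
  have hle : ∀ y, ‖y‖ ^ 2 * |exp (-‖y‖ ^ 2) - exp (-‖y - w‖ ^ 2)| ≤ ‖w‖ * exp (M ^ 2) * g y := by
    intro y
    have hM : 0 ≤ M := (norm_nonneg w).trans hw
    have hexp : exp (‖w‖ ^ 2) ≤ exp (M ^ 2) :=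
      exp_le_exp.2 (pow_le_pow_left₀ (norm_nonneg w) hw 2)
    calc ‖y‖ ^ 2 * |exp (-‖y‖ ^ 2) - exp (-‖y - w‖ ^ 2)|
        ≤ ‖y‖ ^ 2 * (‖w‖ * (2 * ‖y‖ + ‖w‖) * exp (‖w‖ ^ 2) * exp (-2⁻¹ * ‖y‖ ^ 2)) := by
          gcongr; exact abs_exp_neg_sq_norm_sub_exp_neg_sq_norm_sub_le y w
      _ ≤ ‖y‖ ^ 2 * (‖w‖ * (2 * ‖y‖ + M) * exp (M ^ 2) * exp (-2⁻¹ * ‖y‖ ^ 2)) := by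
          gcongr
      _ = ‖w‖ * exp (M ^ 2) * g y := by ring
  calc ∫ y, ‖y‖ ^ 2 * |exp (-‖y‖ ^ 2) - exp (-‖y - w‖ ^ 2)|
      ≤ ∫ y, ‖w‖ * exp (M ^ 2) * g y :=
        integral_mono_of_nonneg (.of_forall fun y ↦ by positivity) (hg.const_mul _)
          (.of_forall hle)
    _ = (exp (M ^ 2) * ∫ y, g y) * ‖w‖ := by rw [integral_const_mul]; ring
    _ ≤ _ := by gcongr; exact le_max_left _ _

lemma integral_sq_norm_mul_abs_gaussian_sub_eq {t : ℝ} (ht : 0 < t) (v : V) :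
    (∫ x : V, ‖x‖ ^ 2 *
        |(4 * π * t) ^ (-(Module.finrank ℝ V : ℝ) / 2) * exp (-‖x‖ ^ 2 / (4 * t)) -
          (4 * π * t) ^ (-(Module.finrank ℝ V : ℝ) / 2) * exp (-‖x - v‖ ^ 2 / (4 * t))|) =
      4 * t * π ^ (-(Module.finrank ℝ V : ℝ) / 2) *
        ∫ y : V, ‖y‖ ^ 2 * |exp (-‖y‖ ^ 2) - exp (-‖y - (2 * √t)⁻¹ • v‖ ^ 2)| := by
  set n := Module.finrank ℝ V
  set s := 2 * √t
  have hs : 0 < s := by positivity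
  have hs2 : s ^ 2 = 4 * t := by rw [mul_pow, sq_sqrt ht.le]; norm_num
  set f : V → ℝ := fun x ↦ ‖x‖ ^ 2 *
    |(4 * π * t) ^ (-(n : ℝ) / 2) * exp (-‖x‖ ^ 2 / (4 * t)) -
      (4 * π * t) ^ (-(n : ℝ) / 2) * exp (-‖x - v‖ ^ 2 / (4 * t))|
  have hchange : ∫ x, f x = s ^ n * ∫ y, f (s • y) := by
    have := Measure.integral_comp_inv_smul volume (fun y ↦ f (s • y)) s
    simp only [smul_inv_smul₀ hs.ne'] at this
    rw [this, abs_of_pos (pow_pos hs _), smul_eq_mul]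
  have hscale : ∀ z : V, -‖s • z‖ ^ 2 / (4 * t) = -‖z‖ ^ 2 := fun z ↦ by
    rw [norm_smul, norm_of_nonneg hs.le, mul_pow, hs2]; field_simp
  have hpoint : ∀ y, f (s • y) = s ^ 2 * (4 * π * t) ^ (-(n : ℝ) / 2) *
      (‖y‖ ^ 2 * |exp (-‖y‖ ^ 2) - exp (-‖y - s⁻¹ • v‖ ^ 2)|) := fun y ↦ by
    have hsub : s • y - v = s • (y - s⁻¹ • v) := by rw [smul_sub, smul_inv_smul₀ hs.ne']
    simp only [f, hsub, hscale]
    rw [← mul_sub, abs_mul, abs_of_pos (rpow_pos_of_pos (by positivity) _), norm_smul,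
      norm_of_nonneg hs.le]
    ring
  have hconst : s ^ n * (s ^ 2 * (4 * π * t) ^ (-(n : ℝ) / 2)) = 4 * t * π ^ (-(n : ℝ) / 2) := by
    have hpow : (s ^ 2) ^ (-(n : ℝ) / 2) = (s ^ n)⁻¹ := by
      rw [← rpow_natCast s 2, ← rpow_mul hs.le, ← rpow_natCast s n, ← rpow_neg hs.le]
      congr 1; push_cast; ring
    rw [show 4 * π * t = π * s ^ 2 by rw [hs2]; ring, mul_rpow pi_pos.le (by positivity), hpow,
      ← hs2]
    field_simp
  rw [hchange]
  simp only [hpoint, integral_const_mul]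
  rw [← mul_assoc, hconst]

end InnerProductSpace

theorem stmt_12_general (d : ℕ) (M : ℝ) :
    ∃ C : ℝ, 0 < C ∧ ∀ (t : ℝ), 0 < t → ∀ v : EuclideanSpace ℝ (Fin d),
      ‖v‖ ≤ M * Real.sqrt t →
      (∫ x : EuclideanSpace ℝ (Fin d),
          ‖x‖ ^ 2 * |(4 * π * t) ^ (-(d : ℝ) / 2) * Real.exp (-‖x‖ ^ 2 / (4 * t)) -
            (4 * π * t) ^ (-(d : ℝ) / 2) * Real.exp (-‖x - v‖ ^ 2 / (4 * t))|)
        ≤ C * Real.sqrt t * ‖v‖ := by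
  obtain ⟨C, hC, hbound⟩ :=
    exists_integral_sq_norm_mul_abs_exp_neg_sq_norm_sub_le (V := EuclideanSpace ℝ (Fin d)) (M / 2)
  refine ⟨2 * π ^ (-(d : ℝ) / 2) * C, by positivity, fun t ht v hv ↦ ?_⟩
  have hs : 0 < 2 * √t := by positivity
  have hw : ‖(2 * √t)⁻¹ • v‖ = ‖v‖ / (2 * √t) := by
    rw [norm_smul, norm_inv, norm_of_nonneg hs.le, inv_mul_eq_div]
  have hwM : ‖(2 * √t)⁻¹ • v‖ ≤ M / 2 := by
    rw [hw, div_le_iff₀ hs]; linarith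
  have hscaling := integral_sq_norm_mul_abs_gaussian_sub_eq (V := EuclideanSpace ℝ (Fin d)) ht v
  rw [finrank_euclideanSpace_fin] at hscaling
  rw [hscaling]
  calc 4 * t * π ^ (-(d : ℝ) / 2) * ∫ y : EuclideanSpace ℝ (Fin d),
        ‖y‖ ^ 2 * |exp (-‖y‖ ^ 2) - exp (-‖y - (2 * √t)⁻¹ • v‖ ^ 2)|
      ≤ 4 * t * π ^ (-(d : ℝ) / 2) * (C * (‖v‖ / (2 * √t))) := by
        gcongr; rw [← hw]; exact hbound _ hwM
    _ = 2 * π ^ (-(d : ℝ) / 2) * C * √t * ‖v‖ := by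
        rw [show 4 * t = 2 * √t * (2 * √t) by linarith [mul_self_sqrt ht.le]]
        field_simp

/-- Second-moment estimate for the difference of two Gaussians:
`∫ |x|² |Γ(t,x) − Γ(t,x−v)| dx ≤ C √t |v|` for `|v| ≤ M √t`. -/
theorem stmt_12 (d : ℕ) (hd : 1 ≤ d) (M : ℝ) (hM : 0 < M) :
    ∃ C : ℝ, 0 < C ∧ ∀ (t : ℝ), 0 < t → ∀ v : EuclideanSpace ℝ (Fin d),
      ‖v‖ ≤ M * Real.sqrt t →
      (∫ x : EuclideanSpace ℝ (Fin d),
          ‖x‖ ^ 2 * |(4 * π * t) ^ (-(d : ℝ) / 2) * Real.exp (-‖x‖ ^ 2 / (4 * t)) -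
            (4 * π * t) ^ (-(d : ℝ) / 2) * Real.exp (-‖x - v‖ ^ 2 / (4 * t))|)
        ≤ C * Real.sqrt t * ‖v‖ :=
  stmt_12_general d M
end

section
/- In dimension d ≥ 3 with Ω = ℝ^d \ closure(B_R) and φ(x) = 1 − (|x|/R)^{2−d}, the function F_τ(y) = K_τ φ(e^τ y)² G(y) on Ω_τ = e^{−τ}Ω, written radially as e^{−Φ(r)} up to a constant with Φ(r) = r²/2 − 2 log φ_τ(r) − (d−1) log r where φ_τ(r) = 1 − (e^τ r / R)^{2−d}, satisfies Φ''(r) ≥ 1/2 for all r > R e^{−τ} when d ≥ 3 (more precisely, r ↦ −2 log φ_τ(r) − (d−1) log r is convex plus the r²/2 term gives Φ'' ≥ 1). -/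
open Real

/-!
With `g(s) = log (1 - s ^ p)` and `p < 0`, the quotient rule gives
`g'' = -(p (p - 1) s^(p-2) (1 - s^p) + (p s^(p-1))²) / (1 - s^p)²`, and both terms of the
numerator are nonnegative for `s > 1` since `p (p - 1) > 0`. Hence `g` is concave on `(1, ∞)`, and
`Φ(r) = r²/2 - 2 g(c r) - k log r` has `Φ''(r) = 1 - 2 c² g''(c r) + k / r² ≥ 1` whenever `k ≥ 0`.
-/

section LogOneSubRpow

variable {p s : ℝ}

lemma one_sub_rpow_pos (hs : 1 < s) (hp : p < 0) : 0 < 1 - s ^ p :=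
  sub_pos.2 (rpow_lt_one_of_one_lt_of_neg hs hp)

lemma hasDerivAt_log_one_sub_rpow (hs : 1 < s) (hp : p < 0) :
    HasDerivAt (fun x : ℝ => log (1 - x ^ p)) (-(p * s ^ (p - 1)) / (1 - s ^ p)) s :=
  ((hasDerivAt_rpow_const (Or.inl (by linarith))).const_sub 1).log (one_sub_rpow_pos hs hp).ne'

lemma hasDerivAt_deriv_log_one_sub_rpow (hs : 1 < s) (hp : p < 0) :
    HasDerivAt (fun x : ℝ => -(p * x ^ (p - 1)) / (1 - x ^ p))
      (-(p * (p - 1) * s ^ (p - 2) * (1 - s ^ p) + (p * s ^ (p - 1)) ^ 2) / (1 - s ^ p) ^ 2) s := by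
  have hs0 : s ≠ 0 := by linarith
  have hnum : HasDerivAt (fun x : ℝ => -(p * x ^ (p - 1))) (-(p * ((p - 1) * s ^ (p - 2)))) s :=
    ((hasDerivAt_rpow_const (Or.inl hs0)).const_mul p).neg.congr_deriv (by norm_num [sub_sub])
  have hden := (hasDerivAt_rpow_const (p := p) (Or.inl hs0)).const_sub 1
  exact (hnum.div hden (one_sub_rpow_pos hs hp).ne').congr_deriv (by ring)

lemma second_deriv_log_one_sub_rpow_nonpos (hs : 1 < s) (hp : p < 0) :
    -(p * (p - 1) * s ^ (p - 2) * (1 - s ^ p) + (p * s ^ (p - 1)) ^ 2) / (1 - s ^ p) ^ 2 ≤ 0 := by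
  have hpp : 0 ≤ p * (p - 1) := mul_nonneg_of_nonpos_of_nonpos hp.le (by linarith)
  have hpow : 0 ≤ s ^ (p - 2) := rpow_nonneg (by linarith) _
  refine div_nonpos_of_nonpos_of_nonneg (neg_nonpos.2 (add_nonneg ?_ (sq_nonneg _))) (sq_nonneg _)
  exact mul_nonneg (mul_nonneg hpp hpow) (one_sub_rpow_pos hs hp).le

theorem concaveOn_log_one_sub_rpow (hp : p < 0) :
    ConcaveOn ℝ (Set.Ioi 1) (fun s : ℝ => log (1 - s ^ p)) := by
  refine concaveOn_of_hasDerivWithinAt2_nonpos (convex_Ioi 1)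
    (f' := fun x => -(p * x ^ (p - 1)) / (1 - x ^ p))
    (f'' := fun x => -(p * (p - 1) * x ^ (p - 2) * (1 - x ^ p) + (p * x ^ (p - 1)) ^ 2) / (1 - x ^ p) ^ 2)
    (fun x hx => (hasDerivAt_log_one_sub_rpow hx hp).continuousAt.continuousWithinAt) ?_ ?_ ?_ <;>
    rw [interior_Ioi] <;> intro x hx
  · exact (hasDerivAt_log_one_sub_rpow hx hp).hasDerivWithinAt
  · exact (hasDerivAt_deriv_log_one_sub_rpow hx hp).hasDerivWithinAt
  · exact second_deriv_log_one_sub_rpow_nonpos hx hp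

end LogOneSubRpow

section RadialPotential

variable {c k p r : ℝ}

lemma hasDerivAt_radialPotential (hr : 1 < c * r) (hp : p < 0) :
    HasDerivAt (fun x : ℝ => x ^ 2 / 2 - 2 * log (1 - (c * x) ^ p) - k * log x)
      (r - 2 * (-(p * (c * r) ^ (p - 1)) / (1 - (c * r) ^ p) * c) - k * r⁻¹) r := by
  have hr0 : r ≠ 0 := right_ne_zero_of_mul (by linarith : c * r ≠ 0)
  have hsq : HasDerivAt (fun x : ℝ => x ^ 2 / 2) r r := by
    simpa using (hasDerivAt_pow 2 r).div_const 2
  have hlog := (hasDerivAt_log_one_sub_rpow hr hp).comp r ((hasDerivAt_id r).const_mul c)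
  simp only [mul_one] at hlog
  exact (hsq.sub (hlog.const_mul 2)).sub ((hasDerivAt_log hr0).const_mul k)

theorem one_le_deriv_deriv_radialPotential (hk : 0 ≤ k) (hr : 1 < c * r) (hp : p < 0) :
    1 ≤ deriv (deriv (fun x : ℝ => x ^ 2 / 2 - 2 * log (1 - (c * x) ^ p) - k * log x)) r := by
  have hr0 : r ≠ 0 := right_ne_zero_of_mul (by linarith : c * r ≠ 0)
  have hderiv : deriv (fun x : ℝ => x ^ 2 / 2 - 2 * log (1 - (c * x) ^ p) - k * log x)
      =ᶠ[nhds r] fun x => x - 2 * (-(p * (c * x) ^ (p - 1)) / (1 - (c * x) ^ p) * c) - k * x⁻¹ := by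
    have hopen : IsOpen {x : ℝ | 1 < c * x} := isOpen_lt continuous_const (continuous_const_mul c)
    filter_upwards [hopen.mem_nhds hr] with x hx
    exact (hasDerivAt_radialPotential hx hp).deriv
  have hinner := (hasDerivAt_deriv_log_one_sub_rpow hr hp).comp r ((hasDerivAt_id' r).const_mul c)
  simp only [Function.comp_def, mul_one] at hinner
  have hsecond := ((hasDerivAt_id' r).sub ((hinner.mul_const c).const_mul 2)).sub
    ((hasDerivAt_inv hr0).const_mul k)
  rw [hderiv.deriv_eq]
  refine le_of_le_of_eq ?_ hsecond.deriv.symm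
  have hg'' := second_deriv_log_one_sub_rpow_nonpos hr hp
  have hkr : 0 ≤ k * (r ^ 2)⁻¹ := by positivity
  nlinarith [mul_nonneg (sq_nonneg c) (neg_nonneg.2 hg'')]

end RadialPotential

/-- Uniform convexity of the radial potential of the transient equilibrium
outside a ball in dimension `d ≥ 3`: the map `s ↦ log(1 - s^{2-d})` is concave
on `(1,∞)`, and the potential
`Φ(r) = r²/2 − 2 log(1 − (e^τ r/R)^{2-d}) − (d−1) log r` has `Φ'' ≥ 1` on
`(R e^{-τ}, ∞)`. -/
theorem stmt_15 (d : ℕ) (hd : 3 ≤ d) (R τ : ℝ) (hR : 0 < R) :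
    ConcaveOn ℝ (Set.Ioi (1:ℝ)) (fun s : ℝ => Real.log (1 - s ^ ((2:ℝ) - d))) ∧
    ∀ r : ℝ, R * Real.exp (-τ) < r →
      1 ≤ deriv (deriv (fun r : ℝ =>
            r ^ 2 / 2 - 2 * Real.log (1 - (Real.exp τ * r / R) ^ ((2:ℝ) - d))
              - ((d : ℝ) - 1) * Real.log r)) r := by
  have hd' : (3 : ℝ) ≤ d := by exact_mod_cast hd
  have hp : (2 : ℝ) - d < 0 := by linarith
  refine ⟨concaveOn_log_one_sub_rpow hp, fun r hr => ?_⟩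
  have hcr : 1 < exp τ / R * r := by
    rw [← mul_div_right_comm, one_lt_div hR]
    calc R = exp τ * (R * exp (-τ)) := by rw [mul_left_comm, ← exp_add, add_neg_cancel, exp_zero, mul_one]
      _ < exp τ * r := mul_lt_mul_of_pos_left hr (exp_pos τ)
  simp_rw [mul_div_right_comm (exp τ)]
  exact one_le_deriv_deriv_radialPotential (by linarith) hcr hp
end
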